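/- arXiv:1111.2962 — 2 statements merged into one kernel-verified Lean document; each statement's English description precedes it below -/
import Mathlib

section
/- Let D be a pretriangulated category and N a triangulated subcategory. The localization D/N := D[Σ(N)⁻¹] of D at the class Σ(N) carries a pretriangulated structure in which the shift functor is induced by the shift of D and a triangle is distinguished if and only if it is isomorphic to the image under the quotient functor Q : D → D/N of a distinguished triangle of D; with this structure Q is an exact (triangulated) functor. Moreover, if D satisfies the octahedral axiom (is triangulated), then so does D/N. -/
/-!
`Σ(N)` need not be closed under composition unless `D` satisfies the octahedral axiom, so we
localize at its multiplicative closure instead, which has the same localization. Using only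
TR1–TR3, the Ore and cancellation conditions for morphisms with cone in `N` extend by induction
on the closure, which therefore admits left and right calculi of fractions.

The distinguished triangles of `D/N` are those isomorphic to images of distinguished triangles,
so TR1 and TR2 are formal. For TR3, a commutative square between images of triangles lifts to
`D` once the target triangle is moved along a morphism `ψ` whose first two components lie in the
closure, and `Q ψ` is invertible by the five lemma: right fractions show that `Hom(M, Q -)` is
exact on distinguished triangles. The octahedral axiom descends along any localization with a
left calculus of fractions.
-/

open CategoryTheory Limits Pretriangulated

universe v u

namespace CategoryTheory.Triangulated

structure Subcategory (C : Type*) [Category C] [HasZeroObject C] [HasShift C ℤ]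
    [Preadditive C] [∀ (n : ℤ), (shiftFunctor C n).Additive] [Pretriangulated C] where
  P : C → Prop
  zero' : ∃ (Z : C) (_ : IsZero Z), P Z
  shift (X : C) (n : ℤ) : P X → P (X⟦n⟧)
  ext₂' (T : Triangle C) (_ : T ∈ distTriang C) : P T.obj₁ → P T.obj₃ →
    ∃ (Y : C) (_ : P Y), Nonempty (T.obj₂ ≅ Y)

def Subcategory.W {C : Type*} [Category C] [HasZeroObject C] [HasShift C ℤ]
    [Preadditive C] [∀ (n : ℤ), (shiftFunctor C n).Additive] [Pretriangulated C]
    (S : Subcategory C) : MorphismProperty C :=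
  fun X Y f => ∃ (Z : C) (g : Y ⟶ Z) (h : Z ⟶ X⟦(1 : ℤ)⟧)
    (_ : Triangle.mk f g h ∈ distTriang C), S.P Z

instance Subcategory.W_isCompatibleWithShift {C : Type*} [Category C] [HasZeroObject C]
    [HasShift C ℤ] [Preadditive C] [∀ (n : ℤ), (shiftFunctor C n).Additive] [Pretriangulated C]
    (S : Subcategory C) : S.W.IsCompatibleWithShift ℤ := by
  have : ObjectProperty.IsStableUnderShift (C := C) S.P ℤ :=
    ⟨fun a => ⟨fun X hX => S.shift X a hX⟩⟩
  exact (inferInstance : (ObjectProperty.trW (C := C) S.P).IsCompatibleWithShift ℤ)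

end CategoryTheory.Triangulated

/-- Auxiliary `Prop` expressing, for a given pretriangulated structure on the Verdier
quotient `D/N = D[Σ(N)⁻¹]` (i.e. on `N.W.Localization`), that: the quotient functor `Q`
is additive; a triangle in the quotient is distinguished iff it is isomorphic to the
image under `Q` of a distinguished triangle of `D`; `Q` is an exact (triangulated)
functor; and if `D` satisfies the octahedral axiom then so does `D/N`. -/
def VerdierQuotientSpec (D : Type u) [Category.{v} D] [HasZeroObject D] [HasShift D ℤ]
    [Preadditive D] [∀ n : ℤ, (shiftFunctor D n).Additive] [Pretriangulated D]
    (N : Triangulated.Subcategory D)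
    [Preadditive N.W.Localization] [HasZeroObject N.W.Localization]
    [∀ n : ℤ, (shiftFunctor N.W.Localization n).Additive]
    [Pretriangulated N.W.Localization] : Prop :=
  N.W.Q.Additive ∧
  (∀ T : Triangle N.W.Localization,
      (T ∈ distTriang N.W.Localization) ↔ T ∈ N.W.Q.essImageDistTriang) ∧
  N.W.Q.IsTriangulated ∧
  (IsTriangulated D → IsTriangulated N.W.Localization)

namespace CategoryTheory

open Category

namespace MorphismProperty

variable {C : Type*} [Category C] (W : MorphismProperty C)

lemma IsInvertedBy.multiplicativeClosure {D : Type*} [Category D] {L : C ⥤ D}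
    (hL : W.IsInvertedBy L) : W.multiplicativeClosure.IsInvertedBy L := by
  rw [IsInvertedBy.iff_le_inverseImage_isomorphisms] at hL ⊢
  exact (multiplicativeClosure_le_iff W _).2 hL

noncomputable def strictUniversalPropertyFixedTargetQMultiplicativeClosure (E : Type*)
    [Category E] :
    Localization.StrictUniversalPropertyFixedTarget W.Q W.multiplicativeClosure E where
  inverts := IsInvertedBy.multiplicativeClosure W W.Q_inverts
  lift F hF := Localization.Construction.lift F (hF.of_le _ _ _ (le_multiplicativeClosure W))
  fac F _ := Localization.Construction.fac F _
  uniq := Localization.Construction.uniq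

instance isLocalization_Q_multiplicativeClosure : W.Q.IsLocalization W.multiplicativeClosure :=
  .mk' _ _ (strictUniversalPropertyFixedTargetQMultiplicativeClosure W _)
    (strictUniversalPropertyFixedTargetQMultiplicativeClosure W _)

lemma hasLeftCalculusOfFractions_multiplicativeClosure
    (exists_leftFraction : ∀ ⦃X Y : C⦄ (φ : W.RightFraction X Y),
      ∃ ψ : W.LeftFraction X Y, φ.f ≫ ψ.s = φ.s ≫ ψ.f)
    (ext : ∀ ⦃X' X Y : C⦄ (f₁ f₂ : X ⟶ Y) (s : X' ⟶ X) (_ : W s) (_ : s ≫ f₁ = s ≫ f₂),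
      ∃ (Y' : C) (t : Y ⟶ Y') (_ : W t), f₁ ≫ t = f₂ ≫ t) :
    W.multiplicativeClosure.HasLeftCalculusOfFractions where
  exists_leftFraction X Y φ := by
    obtain ⟨s, hs, f⟩ := φ
    induction hs generalizing Y with
    | of s hs =>
      obtain ⟨ψ, fac⟩ := exists_leftFraction (RightFraction.mk s hs f)
      exact ⟨LeftFraction.mk ψ.f ψ.s (.of _ ψ.hs), fac⟩
    | id X => exact ⟨LeftFraction.mk f (𝟙 Y) (.id Y), by simp⟩
    | comp_of s₁ s₂ _ hs₂ ih =>
      obtain ⟨ψ₁, fac₁⟩ := ih _ f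
      obtain ⟨ψ₂, fac₂⟩ := exists_leftFraction (RightFraction.mk s₂ hs₂ ψ₁.f)
      exact ⟨LeftFraction.mk ψ₂.f (ψ₁.s ≫ ψ₂.s) (comp_mem _ _ _ ψ₁.hs (.of _ ψ₂.hs)),
        by dsimp at fac₁ fac₂ ⊢; rw [reassoc_of% fac₁, fac₂, assoc]⟩
  ext X' X Y f₁ f₂ s hs fac := by
    induction hs generalizing Y with
    | of s hs =>
      obtain ⟨Y', t, ht, fac'⟩ := ext f₁ f₂ s hs fac
      exact ⟨Y', t, .of _ ht, fac'⟩
    | id X => exact ⟨Y, 𝟙 Y, .id Y, by simpa using fac⟩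
    | comp_of s₁ s₂ _ hs₂ ih =>
      obtain ⟨Y₁, t₁, ht₁, fac₁⟩ := ih _ (s₂ ≫ f₁) (s₂ ≫ f₂) (by simpa using fac)
      obtain ⟨Y₂, t₂, ht₂, fac₂⟩ := ext (f₁ ≫ t₁) (f₂ ≫ t₁) s₂ hs₂ (by simpa using fac₁)
      exact ⟨Y₂, t₁ ≫ t₂, comp_mem _ _ _ ht₁ (.of _ ht₂), by simpa using fac₂⟩

lemma hasRightCalculusOfFractions_multiplicativeClosure
    (exists_rightFraction : ∀ ⦃X Y : C⦄ (φ : W.LeftFraction X Y),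
      ∃ ψ : W.RightFraction X Y, ψ.s ≫ φ.f = ψ.f ≫ φ.s)
    (ext : ∀ ⦃X Y Y' : C⦄ (f₁ f₂ : X ⟶ Y) (s : Y ⟶ Y') (_ : W s) (_ : f₁ ≫ s = f₂ ≫ s),
      ∃ (X' : C) (t : X' ⟶ X) (_ : W t), t ≫ f₁ = t ≫ f₂) :
    W.multiplicativeClosure.HasRightCalculusOfFractions where
  exists_rightFraction X Y φ := by
    obtain ⟨f, s, hs⟩ := φ
    induction hs generalizing X with
    | of s hs =>
      obtain ⟨ψ, fac⟩ := exists_rightFraction (LeftFraction.mk f s hs)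
      exact ⟨RightFraction.mk ψ.s (.of _ ψ.hs) ψ.f, fac⟩
    | id Y => exact ⟨RightFraction.mk (𝟙 X) (.id X) f, by simp⟩
    | comp_of s₁ s₂ _ hs₂ ih =>
      obtain ⟨ψ₂, fac₂⟩ := exists_rightFraction (LeftFraction.mk f s₂ hs₂)
      obtain ⟨ψ₁, fac₁⟩ := ih _ ψ₂.f
      exact ⟨RightFraction.mk (ψ₁.s ≫ ψ₂.s) (comp_mem _ _ _ ψ₁.hs (.of _ ψ₂.hs)) ψ₁.f,
        by dsimp at fac₁ fac₂ ⊢; rw [assoc, fac₂, reassoc_of% fac₁]⟩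
  ext X Y Y' f₁ f₂ s hs fac := by
    induction hs generalizing X with
    | of s hs =>
      obtain ⟨X', t, ht, fac'⟩ := ext f₁ f₂ s hs fac
      exact ⟨X', t, .of _ ht, fac'⟩
    | id Y => exact ⟨X, 𝟙 X, .id X, by simpa using fac⟩
    | comp_of s₁ s₂ _ hs₂ ih =>
      obtain ⟨X₂, t₂, ht₂, fac₂⟩ := ext (f₁ ≫ s₁) (f₂ ≫ s₁) s₂ hs₂ (by simpa using fac)
      obtain ⟨X₁, t₁, ht₁, fac₁⟩ := ih _ (t₂ ≫ f₁) (t₂ ≫ f₂) (by simpa using fac₂)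
      exact ⟨X₁, t₁ ≫ t₂, comp_mem _ _ _ ht₁ (.of _ ht₂), by simpa using fac₁⟩

end MorphismProperty

namespace ObjectProperty

variable {C : Type*} [Category C] [HasZeroObject C] [HasShift C ℤ] [Preadditive C]
  [∀ n : ℤ, (shiftFunctor C n).Additive] [Pretriangulated C] (P : ObjectProperty C)

lemma trW_exists_leftFraction ⦃X Y : C⦄ (φ : P.trW.RightFraction X Y) :
    ∃ ψ : P.trW.LeftFraction X Y, φ.f ≫ ψ.s = φ.s ≫ ψ.f := by
  obtain ⟨Z, g, h, hT, hZ⟩ := φ.hs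
  obtain ⟨Y', s, _, hT'⟩ := distinguished_cocone_triangle₂ (h ≫ φ.f⟦(1 : ℤ)⟧')
  obtain ⟨f, fac, -⟩ :=
    complete_distinguished_triangle_morphism₂ _ _ hT hT' φ.f (𝟙 Z) (id_comp _).symm
  exact ⟨.mk f s (trW.mk P hT' hZ), fac.symm⟩

lemma trW_ext_left [P.IsStableUnderShift ℤ] ⦃X' X Y : C⦄ (f₁ f₂ : X ⟶ Y) (s : X' ⟶ X)
    (hs : P.trW s) (fac : s ≫ f₁ = s ≫ f₂) :
    ∃ (Y' : C) (t : Y ⟶ Y') (_ : P.trW t), f₁ ≫ t = f₂ ≫ t := by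
  obtain ⟨Z, g, _, hT, hZ⟩ := hs
  have hsf : s ≫ (f₁ - f₂) = 0 := by rw [Preadditive.comp_sub, fac, sub_self]
  obtain ⟨q, hq⟩ : ∃ q : Z ⟶ Y, f₁ - f₂ = g ≫ q := Triangle.yoneda_exact₂ _ hT _ hsf
  obtain ⟨Y', t, _, hT'⟩ := distinguished_cocone_triangle q
  have hqt : q ≫ t = 0 := comp_distTriang_mor_zero₁₂ _ hT'
  refine ⟨Y', t, trW.mk' P hT' hZ, ?_⟩
  rw [← sub_eq_zero, ← Preadditive.sub_comp, hq, assoc, hqt, comp_zero]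

lemma trW_exists_rightFraction ⦃X Y : C⦄ (φ : P.trW.LeftFraction X Y) :
    ∃ ψ : P.trW.RightFraction X Y, ψ.s ≫ φ.f = ψ.f ≫ φ.s := by
  obtain ⟨Z, g, h, hT, hZ⟩ := φ.hs
  obtain ⟨X', s, _, hT'⟩ := distinguished_cocone_triangle₁ (φ.f ≫ g)
  obtain ⟨f, fac, -⟩ :=
    complete_distinguished_triangle_morphism₁ _ _ hT' hT φ.f (𝟙 Z) (comp_id _)
  exact ⟨.mk s (trW.mk P hT' hZ) f, fac⟩

lemma trW_ext_right [P.IsStableUnderShift ℤ] ⦃X Y Y' : C⦄ (f₁ f₂ : X ⟶ Y) (s : Y ⟶ Y')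
    (hs : P.trW s) (fac : f₁ ≫ s = f₂ ≫ s) :
    ∃ (X' : C) (t : X' ⟶ X) (_ : P.trW t), t ≫ f₁ = t ≫ f₂ := by
  obtain ⟨Z, g, _, hT, hZ⟩ := (P.trW_iff' s).1 hs
  have hfs : (f₁ - f₂) ≫ s = 0 := by rw [Preadditive.sub_comp, fac, sub_self]
  obtain ⟨q, hq⟩ : ∃ q : X ⟶ Z, f₁ - f₂ = q ≫ g := Triangle.coyoneda_exact₂ _ hT _ hfs
  obtain ⟨X', t, _, hT'⟩ := distinguished_cocone_triangle₁ q
  have htq : t ≫ q = 0 := comp_distTriang_mor_zero₁₂ _ hT'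
  refine ⟨X', t, trW.mk P hT' hZ, ?_⟩
  rw [← sub_eq_zero, ← Preadditive.comp_sub, hq, reassoc_of% htq, zero_comp]

instance [P.IsStableUnderShift ℤ] : P.trW.multiplicativeClosure.HasLeftCalculusOfFractions :=
  P.trW.hasLeftCalculusOfFractions_multiplicativeClosure P.trW_exists_leftFraction P.trW_ext_left

instance [P.IsStableUnderShift ℤ] : P.trW.multiplicativeClosure.HasRightCalculusOfFractions :=
  P.trW.hasRightCalculusOfFractions_multiplicativeClosure P.trW_exists_rightFraction
    P.trW_ext_right

end ObjectProperty

namespace Pretriangulated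

variable {C : Type*} [Category C] [HasZeroObject C] [HasShift C ℤ] [Preadditive C]
  [∀ n : ℤ, (shiftFunctor C n).Additive] [Pretriangulated C]
  {E : Type*} [Category E] [Preadditive E]

lemma isIso_map_hom₃_of_exact (L : C ⥤ E)
    (hL : ∀ T ∈ distTriang C, ∀ M : E,
      Function.Exact (Preadditive.rightComp M (L.map T.mor₁))
        (Preadditive.rightComp M (L.map T.mor₂)))
    {T₁ T₂ : Triangle C} (φ : T₁ ⟶ T₂) (hT₁ : T₁ ∈ distTriang C) (hT₂ : T₂ ∈ distTriang C)
    (h₁ : IsIso (L.map φ.hom₁)) (h₂ : IsIso (L.map φ.hom₂))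
    (h₁' : IsIso (L.map (φ.hom₁⟦(1 : ℤ)⟧'))) (h₂' : IsIso (L.map (φ.hom₂⟦(1 : ℤ)⟧'))) :
    IsIso (L.map φ.hom₃) := by
  refine isIso_of_yoneda_map_bijective _ fun M => ?_
  let R {X Y : C} (f : X ⟶ Y) := Preadditive.rightComp M (L.map f)
  have comm {X₁ X₂ Y₁ Y₂ : C} {f : X₁ ⟶ X₂} {g : Y₁ ⟶ Y₂} {a : X₁ ⟶ Y₁} {b : X₂ ⟶ Y₂}
      (h : f ≫ b = a ≫ g) : (R g).comp (R a) = (R b).comp (R f) := by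
    ext x
    change (x ≫ L.map a) ≫ L.map g = (x ≫ L.map f) ≫ L.map b
    rw [assoc, assoc, ← L.map_comp, ← L.map_comp, h]
  have bij {X Y : C} (f : X ⟶ Y) (_ : IsIso (L.map f)) : Function.Bijective (R f) :=
    (isIso_iff_yoneda_map_bijective (L.map f)).1 inferInstance M
  have hT₁' := rot_of_distTriang _ hT₁
  have hT₂' := rot_of_distTriang _ hT₂
  let ψ := (rotate C).map ((rotate C).map φ)
  -- the five lemma for `Hom(M, L -)` along `T → T.rotate → T.rotate.rotate`, which keeps the
  -- rows inside `C` and so needs no shift on `E`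
  exact AddMonoidHom.bijective_of_surjective_of_bijective_of_bijective_of_injective
    (R T₁.mor₁) (R T₁.mor₂) (R T₁.mor₃) (R T₁.rotate.rotate.mor₂)
    (R T₂.mor₁) (R T₂.mor₂) (R T₂.mor₃) (R T₂.rotate.rotate.mor₂)
    (R φ.hom₁) (R φ.hom₂) (R φ.hom₃) (R ψ.hom₂) (R ψ.hom₃)
    (comm φ.comm₁) (comm φ.comm₂) (comm ψ.comm₁) (comm ψ.comm₂)
    (hL _ hT₁ M) (hL _ hT₁' M) (hL _ (rot_of_distTriang _ hT₁') M)
    (hL _ hT₂ M) (hL _ hT₂' M) (hL _ (rot_of_distTriang _ hT₂') M)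
    (bij _ h₁).2 (bij _ h₂) (bij _ h₁') (bij _ h₂').1

end Pretriangulated

namespace Localization

variable {C D : Type*} [Category C] [Category D] [HasZeroObject C] [HasShift C ℤ]
  [Preadditive C] [∀ n : ℤ, (shiftFunctor C n).Additive] [Pretriangulated C] (L : C ⥤ D)

lemma exists_triangle_hom_of_comm₁ (W : MorphismProperty C) [L.IsLocalization W]
    [W.HasLeftCalculusOfFractions] (T₁ T₂ : Triangle C)
    (hT₁ : T₁ ∈ distTriang C) (hT₂ : T₂ ∈ distTriang C)
    (a : L.obj T₁.obj₁ ⟶ L.obj T₂.obj₁) (b : L.obj T₁.obj₂ ⟶ L.obj T₂.obj₂)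
    (fac : L.map T₁.mor₁ ≫ b = a ≫ L.map T₂.mor₁) :
    ∃ (T₃ : Triangle C) (_ : T₃ ∈ distTriang C) (ψ : T₂ ⟶ T₃) (φ : T₁ ⟶ T₃),
      W ψ.hom₁ ∧ W ψ.hom₂ ∧ L.map φ.hom₁ = a ≫ L.map ψ.hom₁ ∧
        L.map φ.hom₂ = b ≫ L.map ψ.hom₂ := by
  obtain ⟨α, hα⟩ := exists_leftFraction L W a
  obtain ⟨β, hβ⟩ := (MorphismProperty.RightFraction.mk α.s α.hs T₂.mor₁).exists_leftFraction
  obtain ⟨γ, hγ⟩ := exists_leftFraction L W (b ≫ L.map β.s)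
  have := inverts L W β.s β.hs
  have := inverts L W γ.s γ.hs
  dsimp at hβ
  obtain ⟨Z₂, σ, hσ, fac⟩ := (MorphismProperty.map_eq_iff_postcomp L W
    (α.f ≫ β.f ≫ γ.s) (T₁.mor₁ ≫ γ.f)).1 (by
      rw [← cancel_mono (L.map β.s), assoc, assoc, hγ, ← cancel_mono (L.map γ.s),
        assoc, assoc, assoc, hα, MorphismProperty.LeftFraction.map_comp_map_s,
        ← Functor.map_comp] at fac
      rw [fac, ← Functor.map_comp_assoc, hβ, Functor.map_comp, Functor.map_comp,
        Functor.map_comp, assoc, MorphismProperty.LeftFraction.map_comp_map_s_assoc])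
  simp only [assoc] at fac
  obtain ⟨Y₃, g, h, hT₃⟩ := distinguished_cocone_triangle (β.f ≫ γ.s ≫ σ)
  let T₃ := Triangle.mk (β.f ≫ γ.s ≫ σ) g h
  change T₃ ∈ distTriang C at hT₃
  have comm : T₂.mor₁ ≫ β.s ≫ γ.s ≫ σ = α.s ≫ β.f ≫ γ.s ≫ σ := by rw [reassoc_of% hβ]
  refine ⟨T₃, hT₃, completeDistinguishedTriangleMorphism _ _ hT₂ hT₃ α.s _ comm,
    completeDistinguishedTriangleMorphism _ _ hT₁ hT₃ α.f (γ.f ≫ σ) fac.symm,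
    α.hs, W.comp_mem _ _ β.hs (W.comp_mem _ _ γ.hs hσ), ?_, ?_⟩
  · change L.map α.f = a ≫ L.map α.s
    rw [hα, MorphismProperty.LeftFraction.map_comp_map_s]
  · change L.map (γ.f ≫ σ) = b ≫ L.map (β.s ≫ γ.s ≫ σ)
    simp only [Functor.map_comp, reassoc_of% hγ,
      MorphismProperty.LeftFraction.map_comp_map_s_assoc]

variable [Preadditive D] [L.Additive]

lemma exact_rightComp_map_mor₁_map_mor₂ (W : MorphismProperty C) [L.IsLocalization W]
    [W.HasRightCalculusOfFractions] (T : Triangle C)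
    (hT : T ∈ distTriang C) (M : D) :
    Function.Exact (Preadditive.rightComp M (L.map T.mor₁))
      (Preadditive.rightComp M (L.map T.mor₂)) := by
  have := essSurj L W
  let e := L.objObjPreimageIso M
  intro g
  refine ⟨fun hg => ?_, ?_⟩
  · change g ≫ L.map T.mor₂ = 0 at hg
    obtain ⟨φ, hφ⟩ := exists_rightFraction L W (e.hom ≫ g)
    obtain ⟨X₀, s, hs, fac⟩ := (MorphismProperty.map_eq_iff_precomp L W (φ.f ≫ T.mor₂) 0).1 (by
      rw [L.map_comp, L.map_zero, ← φ.map_s_comp_map L (inverts L W), ← hφ, assoc, assoc, hg,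
        comp_zero, comp_zero])
    obtain ⟨ψ, hψ⟩ := Triangle.coyoneda_exact₂ T hT (s ≫ φ.f) (by rw [assoc, fac, comp_zero])
    have := inverts L W s hs
    refine ⟨e.inv ≫ inv (L.map φ.s) ≫ inv (L.map s) ≫ L.map ψ, ?_⟩
    change (e.inv ≫ inv (L.map φ.s) ≫ inv (L.map s) ≫ L.map ψ) ≫ L.map T.mor₁ = g
    rw [assoc, assoc, assoc, ← L.map_comp, ← hψ, L.map_comp, IsIso.inv_hom_id_assoc,
      ← φ.map_s_comp_map L (inverts L W), IsIso.inv_hom_id_assoc, ← hφ, Iso.inv_hom_id_assoc]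
  · rintro ⟨h, rfl⟩
    change (h ≫ L.map T.mor₁) ≫ L.map T.mor₂ = 0
    rw [assoc, ← L.map_comp, comp_distTriang_mor_zero₁₂ _ hT, L.map_zero, comp_zero]

variable [HasShift D ℤ] [L.CommShift ℤ]

lemma isIso_map_hom₃ (W : MorphismProperty C) [L.IsLocalization W]
    [W.HasRightCalculusOfFractions] {T₁ T₂ : Triangle C} (φ : T₁ ⟶ T₂)
    (hT₁ : T₁ ∈ distTriang C) (hT₂ : T₂ ∈ distTriang C) (h₁ : IsIso (L.map φ.hom₁))
    (h₂ : IsIso (L.map φ.hom₂)) : IsIso (L.map φ.hom₃) := by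
  have isIso_map_shift {X Y : C} (f : X ⟶ Y) (_ : IsIso (L.map f)) :
      IsIso (L.map (f⟦(1 : ℤ)⟧')) :=
    (NatIso.isIso_map_iff (L.commShiftIso (1 : ℤ)) f).2 (by dsimp; infer_instance)
  exact isIso_map_hom₃_of_exact L (exact_rightComp_map_mor₁_map_mor₂ L W) φ hT₁ hT₂ h₁ h₂
    (isIso_map_shift _ h₁) (isIso_map_shift _ h₂)

lemma exists_mapTriangle_hom (W : MorphismProperty C) [L.IsLocalization W]
    [W.HasLeftCalculusOfFractions] [W.HasRightCalculusOfFractions]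
    (T₁ T₂ : Triangle C) (hT₁ : T₁ ∈ distTriang C) (hT₂ : T₂ ∈ distTriang C)
    (a : L.obj T₁.obj₁ ⟶ L.obj T₂.obj₁) (b : L.obj T₁.obj₂ ⟶ L.obj T₂.obj₂)
    (fac : L.map T₁.mor₁ ≫ b = a ≫ L.map T₂.mor₁) :
    ∃ φ : L.mapTriangle.obj T₁ ⟶ L.mapTriangle.obj T₂, φ.hom₁ = a ∧ φ.hom₂ = b := by
  obtain ⟨T₃, hT₃, ψ, φ, hψ₁, hψ₂, hφ₁, hφ₂⟩ :=
    exists_triangle_hom_of_comm₁ L W T₁ T₂ hT₁ hT₂ a b fac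
  have h₁ := inverts L W _ hψ₁
  have h₂ := inverts L W _ hψ₂
  have : IsIso (L.mapTriangle.map ψ) :=
    Triangle.isIso_of_isIsos _ h₁ h₂ (isIso_map_hom₃ L W ψ hT₂ hT₃ h₁ h₂)
  refine ⟨L.mapTriangle.map φ ≫ inv (L.mapTriangle.map ψ), ?_, ?_⟩
  · apply (cancel_mono (L.mapTriangle.map ψ).hom₁).1
    simp only [← comp_hom₁, assoc, IsIso.inv_hom_id, comp_id]
    exact hφ₁
  · apply (cancel_mono (L.mapTriangle.map ψ).hom₂).1
    simp only [← comp_hom₂, assoc, IsIso.inv_hom_id, comp_id]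
    exact hφ₂

variable [HasZeroObject D] [∀ n : ℤ, (shiftFunctor D n).Additive]

/-- Unlike `Triangulated.Localization.pretriangulated`, this does not need `W` to be compatible
with the triangulation: in TR3, the five lemma `isIso_map_hom₃` takes its place. -/
noncomputable abbrev pretriangulatedOfHasRightCalculusOfFractions (W : MorphismProperty C)
    [L.IsLocalization W] [W.HasLeftCalculusOfFractions] [W.HasRightCalculusOfFractions] :
    Pretriangulated D where
  distinguishedTriangles := L.essImageDistTriang
  isomorphic_distinguished _ hT₁ _ e := L.essImageDistTriang_mem_of_iso e hT₁
  contractible_distinguished :=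
    have := essSurj L W
    L.contractible_mem_essImageDistTriang
  distinguished_cocone_triangle f := Triangulated.Localization.distinguished_cocone_triangle L W f
  rotate_distinguished_triangle := L.rotate_essImageDistTriang
  complete_distinguished_triangle_morphism :=
    L.complete_distinguished_essImageDistTriang_morphism (exists_mapTriangle_hom L W)

end Localization

namespace Triangulated.Subcategory

variable {C : Type*} [Category C] [HasZeroObject C] [HasShift C ℤ] [Preadditive C]
  [∀ n : ℤ, (shiftFunctor C n).Additive] [Pretriangulated C] (N : Subcategory C)

instance : ObjectProperty.IsStableUnderShift N.P ℤ :=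
  ⟨fun n => ⟨fun X hX => N.shift X n hX⟩⟩

instance : N.W.multiplicativeClosure.HasLeftCalculusOfFractions :=
  inferInstanceAs ((ObjectProperty.trW N.P).multiplicativeClosure.HasLeftCalculusOfFractions)

instance : N.W.multiplicativeClosure.HasRightCalculusOfFractions :=
  inferInstanceAs ((ObjectProperty.trW N.P).multiplicativeClosure.HasRightCalculusOfFractions)

noncomputable instance : Preadditive N.W.Localization :=
  Localization.preadditive N.W.Q N.W.multiplicativeClosure

instance : N.W.Q.Additive :=
  Localization.functor_additive N.W.Q N.W.multiplicativeClosure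

instance : HasZeroObject N.W.Localization :=
  N.W.Q.hasZeroObject_of_additive

instance (n : ℤ) : (shiftFunctor N.W.Localization n).Additive := by
  rw [Localization.functor_additive_iff N.W.Q N.W.multiplicativeClosure]
  exact Functor.additive_of_iso (N.W.Q.commShiftIso n)

noncomputable instance : Pretriangulated N.W.Localization :=
  Localization.pretriangulatedOfHasRightCalculusOfFractions N.W.Q N.W.multiplicativeClosure

instance : N.W.Q.IsTriangulated :=
  ⟨fun T hT => ⟨T, Iso.refl _, hT⟩⟩

instance [IsTriangulated C] : IsTriangulated N.W.Localization :=
  Triangulated.Localization.isTriangulated N.W.Q N.W.multiplicativeClosure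

end Triangulated.Subcategory

end CategoryTheory

/-- Let `D` be a pretriangulated category and `N` a triangulated
subcategory. The localization `D/N := D[Σ(N)⁻¹]` carries a pretriangulated structure,
for the shift induced by the shift of `D`, in which a triangle is distinguished iff it
is isomorphic to the image under the quotient functor `Q : D ⟶ D/N` of a distinguished
triangle of `D`; with this structure `Q` is exact, and if `D` is triangulated
(satisfies the octahedral axiom) then so is `D/N`. -/
theorem verdierQuotient_pretriangulated (D : Type u) [Category.{v} D] [HasZeroObject D]
    [HasShift D ℤ] [Preadditive D] [∀ n : ℤ, (shiftFunctor D n).Additive]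
    [Pretriangulated D] (N : Triangulated.Subcategory D) :
    ∃ (P : Preadditive N.W.Localization) (Z : HasZeroObject N.W.Localization)
      (A : ∀ n : ℤ, @Functor.Additive _ _ _ _ P P (shiftFunctor N.W.Localization n))
      (hP : @Pretriangulated N.W.Localization _ Z _ P A),
      @VerdierQuotientSpec D _ _ _ _ _ _ N P Z A hP := by
  exact ⟨inferInstance, inferInstance, inferInstance, inferInstance,
    inferInstance, fun _ => Iff.rfl, inferInstance, fun _ => inferInstance⟩
end

section
/- Let C be a category and Σ a class of morphisms of C admitting a left calculus of fractions, with quotient functor Q : C → C[Σ⁻¹]. Two fractions (f : X → Y', s : Y → Y' with s ∈ Σ) and (g : X → Y'', t : Y → Y'' with t ∈ Σ) define the same morphism in the localization, i.e. Q(s)⁻¹ ∘ Q(f) = Q(t)⁻¹ ∘ Q(g), if and only if there exist morphisms u : Y' → Z and v : Y'' → Z such that u∘f = v∘g, u∘s = v∘t, and u∘s belongs to Σ. -/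
open CategoryTheory

universe v u

/-- Let `C` be a category and `W` a class of morphisms admitting a
left calculus of fractions, with quotient functor `Q : C ⟶ C[W⁻¹]`. Two fractions
`(f : X ⟶ Y', s : Y ⟶ Y')` and `(g : X ⟶ Y'', t : Y ⟶ Y'')` with `s, t ∈ W` define
the same morphism `Q(s)⁻¹ ∘ Q(f) = Q(t)⁻¹ ∘ Q(g)` in the localization if and only if
there exist `u : Y' ⟶ Z` and `v : Y'' ⟶ Z` with `u ∘ f = v ∘ g`, `u ∘ s = v ∘ t`
and `u ∘ s ∈ W`. -/
theorem localization_leftFraction_eq_iff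
    {C : Type u} [Category.{v} C] (W : MorphismProperty C) [W.HasLeftCalculusOfFractions]
    {X Y Y' Y'' : C} (f : X ⟶ Y') (s : Y ⟶ Y') (hs : W s)
    (g : X ⟶ Y'') (t : Y ⟶ Y'') (ht : W t) :
    W.Q.map f ≫ (Localization.isoOfHom W.Q W s hs).inv =
        W.Q.map g ≫ (Localization.isoOfHom W.Q W t ht).inv ↔
      ∃ (Z : C) (u : Y' ⟶ Z) (v : Y'' ⟶ Z),
        f ≫ u = g ≫ v ∧ s ≫ u = t ≫ v ∧ W (s ≫ u) := by
  have h := MorphismProperty.LeftFraction.map_eq_iff W.Q W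
    (MorphismProperty.LeftFraction.mk f s hs) (MorphismProperty.LeftFraction.mk g t ht)
  have e1 : (MorphismProperty.LeftFraction.mk f s hs).map W.Q (Localization.inverts _ _) =
      W.Q.map f ≫ (Localization.isoOfHom W.Q W s hs).inv := rfl
  have e2 : (MorphismProperty.LeftFraction.mk g t ht).map W.Q (Localization.inverts _ _) =
      W.Q.map g ≫ (Localization.isoOfHom W.Q W t ht).inv := rfl
  rw [e1, e2] at h
  rw [h]
  constructor
  · rintro ⟨Z, u, v, h1, h2, h3⟩
    exact ⟨Z, u, v, h2, h1, h3⟩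
  · rintro ⟨Z, u, v, h1, h2, h3⟩
    exact ⟨Z, u, v, h2, h1, h3⟩
end
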